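/- Assume τ = 0. A secondary structure with at least one link is saturated (no base pair can be added) if and only if its dual weighted rooted plane tree satisfies: every corner has weight at most θ+1, and at each node at most one incident corner has strictly positive weight. -/

import Mathlib

open scoped Classical

inductive RSym where
  | dot | op | cl
deriving DecidableEq

/-- Weighted rooted plane trees: `node w cs ks` has weight `w` on the edge to
its parent (ignored at the root), children `cs`, and corner-weight list `ks`
(one entry per corner, in planar order).  Edge weights record stem lengths
(a stem of edge weight `w` has `w + 1` links), corner weights record numbers
of free elements of segments. -/
inductive WTree where
  | node : ℕ → List WTree → List ℕ → WTree

namespace WTree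

def edgeW : WTree → ℕ
  | .node w _ _ => w

mutual
/-- The dot-bracket word of the secondary structure corresponding to the
tree, via the stem/segment-reduction duality. -/
def word : WTree → List RSym
  | .node _ cs ks => List.replicate ks.headI RSym.dot ++ wordL cs ks.tail

def wordL : List WTree → List ℕ → List RSym
  | [], _ => []
  | c :: cs, ks =>
      List.replicate (c.edgeW + 1) RSym.op ++ word c
        ++ List.replicate (c.edgeW + 1) RSym.cl
        ++ List.replicate ks.headI RSym.dot ++ wordL cs ks.tail
end

end WTree

/-- Excess of opening over closing parentheses among the first `k` symbols. -/
def depth (w : List RSym) (k : ℕ) : ℤ :=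
  ((w.take k).count RSym.op : ℤ) - ((w.take k).count RSym.cl : ℤ)

/-- Positions `i < j` (1-indexed) form a matched parenthesis pair of `w`. -/
def Matched (w : List RSym) (i j : ℕ) : Prop :=
  1 ≤ i ∧ i < j ∧ j ≤ w.length ∧
  w[i - 1]? = some RSym.op ∧ w[j - 1]? = some RSym.cl ∧
  depth w i = depth w (j - 1) ∧
  ∀ k, i ≤ k → k ≤ j - 1 → depth w i ≤ depth w k

/-- The secondary structure (set of base pairs) of a dot-bracket word. -/
noncomputable def structOf (w : List RSym) : Finset (ℕ × ℕ) :=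
  ((Finset.range (w.length + 1)) ×ˢ (Finset.range (w.length + 1))).filter
    (fun p => Matched w p.1 p.2)

def IsSecStr (θ n : ℕ) (P : Finset (ℕ × ℕ)) : Prop :=
  (∀ p ∈ P, 1 ≤ p.1 ∧ p.2 ≤ n ∧ p.1 + θ < p.2) ∧
  (∀ p ∈ P, ∀ q ∈ P, p ≠ q →
    p.1 ≠ q.1 ∧ p.1 ≠ q.2 ∧ p.2 ≠ q.1 ∧ p.2 ≠ q.2) ∧
  (∀ p ∈ P, ∀ q ∈ P, ¬(p.1 < q.1 ∧ q.1 < p.2 ∧ p.2 < q.2))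

/-- Saturated: no base pair can be added keeping a valid secondary structure. -/
def Saturated (θ n : ℕ) (P : Finset (ℕ × ℕ)) : Prop :=
  IsSecStr θ n P ∧ ∀ q : ℕ × ℕ, q ∉ P → ¬ IsSecStr θ n (insert q P)

/-- Admissibility at non-root nodes: the corner list has length arity + 1,
the edge weight is at least `τ`, corners at leaves have weight at least `θ`,
and a node with exactly one child has at least one of its two incident corners
of positive weight (so that the stem reduction was complete). -/
inductive AdmissibleNR (θ τ : ℕ) : WTree → Prop
  | node (w : ℕ) (cs : List WTree) (ks : List ℕ) :
      ks.length = cs.length + 1 →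
      τ ≤ w →
      (cs = [] → ∀ a ∈ ks, θ ≤ a) →
      (cs.length = 1 → 0 < ks.sum) →
      (∀ c ∈ cs, AdmissibleNR θ τ c) →
      AdmissibleNR θ τ (.node w cs ks)

/-- Admissibility of the whole weighted tree (the tree has at least one edge,
corresponding to a secondary structure with at least one link; the root has no
parent edge and is exempt from the arity-1 condition). -/
def Admissible (θ τ : ℕ) : WTree → Prop
  | .node _ cs ks =>
      ks.length = cs.length + 1 ∧ cs ≠ [] ∧ ∀ c ∈ cs, AdmissibleNR θ τ c

/-- All corner weights are at most `b`. -/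
inductive CornersLe (b : ℕ) : WTree → Prop
  | node (w : ℕ) (cs : List WTree) (ks : List ℕ) :
      (∀ a ∈ ks, a ≤ b) →
      (∀ c ∈ cs, CornersLe b c) →
      CornersLe b (.node w cs ks)

/-- At each node, at most one incident corner has strictly positive weight. -/
inductive AtMostOnePos : WTree → Prop
  | node (w : ℕ) (cs : List WTree) (ks : List ℕ) :
      (ks.filter (fun a => 0 < a)).length ≤ 1 →
      (∀ c ∈ cs, AtMostOnePos c) →
      AtMostOnePos (.node w cs ks)


/-!
The word of a tree is a Motzkin word (balanced parentheses interspersed with free bases), and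
its base pairs are its matched parentheses. A matched pair cannot cross a stretch `[a, b]` of
the word that never dips below the depth at `a` and returns to it at `b`. Hence a base pair
can be added exactly when two free bases `a + θ < b` bound such a stretch (`CanPair`):
conversely, a paired base at `a` or `b`, a dip inside, or a greater depth at `b` would each
give a matched pair in conflict with `(a, b)`.

Extendability in this sense is compositional. It is unchanged by enclosing a word in a stem;
a concatenation is extendable iff one side is, or both sides have a free base at depth zero
(far enough apart); a run of `n` free bases is extendable iff `θ + 2 ≤ n`. The word of a node
alternates its corners with the enclosed words of its children, so it is extendable iff some
corner has weight at least `θ + 2`, or some child's word is extendable, or two corners of the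
node are positive: any two corners are separated by a child word, which admissibility makes
longer than `θ + 1`. Admissibility also makes every matched pair enclose at least `θ` bases, so the
word does encode a secondary structure.
-/

namespace RSym

def weight : RSym → ℤ
  | dot => 0
  | op => 1
  | cl => -1

end RSym

namespace SecStr

def height (w : List RSym) : ℤ := (w.count RSym.op : ℤ) - (w.count RSym.cl : ℤ)

theorem depth_eq_height_take (w : List RSym) (k : ℕ) : depth w k = height (w.take k) := rfl

@[simp] theorem height_nil : height [] = 0 := rfl

@[simp] theorem height_cons (s : RSym) (w : List RSym) :
    height (s :: w) = s.weight + height w := by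
  cases s <;> simp only [height, List.count_cons_self, List.count_cons_of_ne, ne_eq, reduceCtorEq,
    not_false_eq_true, RSym.weight, Nat.cast_add, Nat.cast_one] <;> ring

@[simp] theorem height_append (x y : List RSym) : height (x ++ y) = height x + height y := by
  simp only [height, List.count_append]
  push_cast
  ring

@[simp] theorem height_replicate (n : ℕ) (s : RSym) :
    height (List.replicate n s) = n * s.weight := by
  induction n with
  | zero => simp
  | succ n ih =>
    rw [List.replicate_succ, height_cons, ih]
    push_cast
    ring

@[simp] theorem depth_zero (w : List RSym) : depth w 0 = 0 := rfl

theorem depth_of_length_le {w : List RSym} {k : ℕ} (h : w.length ≤ k) :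
    depth w k = height w := by
  rw [depth_eq_height_take, List.take_of_length_le h]

theorem depth_append (x y : List RSym) (k : ℕ) :
    depth (x ++ y) k = depth x k + depth y (k - x.length) := by
  simp only [depth_eq_height_take, List.take_append, height_append]

theorem depth_append_of_le {x : List RSym} (y : List RSym) {k : ℕ} (h : k ≤ x.length) :
    depth (x ++ y) k = depth x k := by
  rw [depth_append, Nat.sub_eq_zero_of_le h, depth_zero, add_zero]

theorem depth_append_add (x y : List RSym) (k : ℕ) :
    depth (x ++ y) (x.length + k) = height x + depth y k := by
  rw [depth_append, depth_of_length_le (Nat.le_add_right _ _), Nat.add_sub_cancel_left]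

theorem depth_replicate (n k : ℕ) (s : RSym) :
    depth (List.replicate n s) k = min k n * s.weight := by
  rw [depth_eq_height_take, List.take_replicate, height_replicate]

theorem depth_succ (w : List RSym) (k : ℕ) :
    depth w (k + 1) = depth w k + (w[k]?.map RSym.weight).getD 0 := by
  rw [depth_eq_height_take, depth_eq_height_take, List.take_add_one, height_append]
  cases w[k]? <;> simp

theorem depth_succ_of_getElem? {w : List RSym} {k : ℕ} {s : RSym} (h : w[k]? = some s) :
    depth w (k + 1) = depth w k + s.weight := by
  simp [depth_succ, h]

theorem depth_succ_bounds (w : List RSym) (k : ℕ) :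
    depth w k - 1 ≤ depth w (k + 1) ∧ depth w (k + 1) ≤ depth w k + 1 := by
  rw [depth_succ]
  rcases w[k]? with _ | (_ | _ | _) <;>
    simp only [Option.map_none, Option.map_some, Option.getD_none, Option.getD_some,
      RSym.weight] <;> omega

theorem getElem?_eq_op_of_depth_succ {w : List RSym} {k : ℕ}
    (h : depth w (k + 1) = depth w k + 1) : w[k]? = some .op := by
  rw [depth_succ] at h
  rcases hk : w[k]? with _ | (_ | _ | _) <;>
    simp only [hk, Option.map_none, Option.map_some, Option.getD_none, Option.getD_some,
      Option.some.injEq, reduceCtorEq, RSym.weight] at h ⊢ <;> omega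

theorem getElem?_eq_cl_of_depth_succ {w : List RSym} {k : ℕ}
    (h : depth w (k + 1) = depth w k - 1) : w[k]? = some .cl := by
  rw [depth_succ] at h
  rcases hk : w[k]? with _ | (_ | _ | _) <;>
    simp only [hk, Option.map_none, Option.map_some, Option.getD_none, Option.getD_some,
      Option.some.injEq, reduceCtorEq, RSym.weight] at h ⊢ <;> omega

theorem getElem?_append_add (x y : List RSym) (k : ℕ) : (x ++ y)[x.length + k]? = y[k]? := by
  rw [List.getElem?_append_right (Nat.le_add_right _ _), Nat.add_sub_cancel_left]

structure IsMotzkin (w : List RSym) : Prop where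
  height_eq_zero : height w = 0
  depth_nonneg (k : ℕ) : 0 ≤ depth w k

theorem isMotzkin_replicate_dot (n : ℕ) : IsMotzkin (List.replicate n .dot) :=
  ⟨by simp [RSym.weight], fun k => by simp [depth_replicate, RSym.weight]⟩

theorem IsMotzkin.append {x y : List RSym} (hx : IsMotzkin x) (hy : IsMotzkin y) :
    IsMotzkin (x ++ y) := by
  refine ⟨by simp [hx.height_eq_zero, hy.height_eq_zero], fun k => ?_⟩
  rw [depth_append]
  exact add_nonneg (hx.depth_nonneg k) (hy.depth_nonneg _)

theorem exists_window {f : ℕ → ℤ} (hf : ∀ m, f m - 1 ≤ f (m + 1) ∧ f (m + 1) ≤ f m + 1)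
    {d : ℤ} {s p e : ℕ} (hsp : s ≤ p) (hpe : p ≤ e) (hs : f s ≤ d) (hp : d < f p)
    (he : f e ≤ d) :
    ∃ t k, s ≤ t ∧ t < p ∧ p < k ∧ k ≤ e ∧ f t = d ∧ f k = d ∧
      ∀ m, t < m → m < k → d < f m := by
  classical
  have hk : ∃ k, p ≤ k ∧ f k ≤ d := ⟨e, hpe, he⟩
  set t := Nat.findGreatest (fun m => f m ≤ d) p
  set k := Nat.find hk
  have ht : f t ≤ d := Nat.findGreatest_spec (P := fun m => f m ≤ d) hsp hs
  have hafter : ∀ m, t < m → m ≤ p → d < f m := fun m h1 h2 =>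
    lt_of_not_ge (Nat.findGreatest_is_greatest h1 h2)
  obtain ⟨hpk, hk'⟩ : p ≤ k ∧ f k ≤ d := Nat.find_spec hk
  have hbefore : ∀ m, p ≤ m → m < k → d < f m := fun m h1 h2 =>
    lt_of_not_ge fun h => Nat.find_min hk h2 ⟨h1, h⟩
  have htp : t < p := lt_of_le_of_ne (Nat.findGreatest_le p) (by rintro h; rw [h] at ht; omega)
  have hpk' : p < k := lt_of_le_of_ne hpk (by rintro h; rw [← h] at hk'; omega)
  refine ⟨t, k, Nat.le_findGreatest hsp hs, htp, hpk', Nat.find_min' hk ⟨hpe, he⟩, ?_, ?_, ?_⟩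
  · have := hafter (t + 1) (by omega) (by omega)
    have := hf t
    omega
  · have := hbefore (k - 1) (by omega) (by omega)
    have := hf (k - 1)
    rw [Nat.sub_add_cancel (by omega)] at this
    omega
  · intro m h1 h2
    rcases le_or_gt m p with h | h
    · exact hafter m h1 h
    · exact hbefore m h.le h2

def IsLevel (w : List RSym) (a b : ℕ) : Prop :=
  depth w a = depth w b ∧ ∀ k, a ≤ k → k ≤ b → depth w a ≤ depth w k

theorem matched_iff {w : List RSym} {i j : ℕ} :
    Matched w i j ↔ 1 ≤ i ∧ i < j ∧ j ≤ w.length ∧ w[i - 1]? = some .op ∧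
      w[j - 1]? = some .cl ∧ IsLevel w i (j - 1) := Iff.rfl

theorem matched_of_window {w : List RSym} {t k : ℕ} {d : ℤ} (htk : t + 1 < k)
    (ht : depth w t = d) (hk : depth w k = d) (hmid : ∀ m, t < m → m < k → d < depth w m) :
    Matched w (t + 1) k := by
  have hop : depth w (t + 1) = d + 1 := by
    have := hmid (t + 1) (by omega) htk
    have := depth_succ_bounds w t
    omega
  have hcl : depth w (k - 1 + 1) = depth w (k - 1) - 1 := by
    have := hmid (k - 1) (by omega) (by omega)
    have := depth_succ_bounds w (k - 1)
    rw [Nat.sub_add_cancel (by omega)] at this ⊢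
    omega
  have hcl' := getElem?_eq_cl_of_depth_succ hcl
  have hlen : k - 1 < w.length := (List.getElem?_eq_some_iff.1 hcl').1
  refine matched_iff.2 ⟨by omega, htk, by omega,
    by rw [Nat.add_sub_cancel]; exact getElem?_eq_op_of_depth_succ (by omega), hcl', ?_,
    fun m h1 h2 => ?_⟩
  · rw [Nat.sub_add_cancel (by omega)] at hcl
    omega
  · have := hmid m (by omega) (by omega)
    omega

end SecStr

namespace Matched

open SecStr

variable {w : List RSym}

theorem isLevel {i j : ℕ} (h : Matched w i j) : IsLevel w i (j - 1) :=
  (matched_iff.1 h).2.2.2.2.2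

theorem depth_pred_lt {i j p : ℕ} (h : Matched w i j) (hip : i ≤ p) (hpj : p < j) :
    depth w (i - 1) < depth w p := by
  obtain ⟨hi, -, -, hop, -, -, hmin⟩ := h
  have := depth_succ_of_getElem? hop
  rw [Nat.sub_add_cancel hi] at this
  have := hmin p hip (by omega)
  simp only [RSym.weight] at *
  omega

theorem depth_snd {i j : ℕ} (h : Matched w i j) : depth w j = depth w (i - 1) := by
  obtain ⟨hi, hij, -, hop, hcl, heq, -⟩ := h
  have e1 := depth_succ_of_getElem? hop
  have e2 := depth_succ_of_getElem? hcl
  rw [Nat.sub_add_cancel hi] at e1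
  rw [Nat.sub_add_cancel (by omega)] at e2
  simp only [RSym.weight] at e1 e2
  omega

theorem right_unique {i j j' : ℕ} (h : Matched w i j) (h' : Matched w i j') : j = j' := by
  by_contra hne
  rcases Nat.lt_or_gt_of_ne hne with hlt | hlt
  · have := h'.depth_pred_lt h.2.1.le hlt
    rw [h.depth_snd] at this
    exact lt_irrefl _ this
  · have := h.depth_pred_lt h'.2.1.le hlt
    rw [h'.depth_snd] at this
    exact lt_irrefl _ this

theorem left_unique {i i' j : ℕ} (h : Matched w i j) (h' : Matched w i' j) : i = i' := by
  by_contra hne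
  have e := h.depth_snd.symm.trans h'.depth_snd
  rcases Nat.lt_or_gt_of_ne hne with hlt | hlt
  · have := h.depth_pred_lt (p := i' - 1) (by omega) (by have := h'.2.1; omega)
    omega
  · have := h'.depth_pred_lt (p := i - 1) (by omega) (by have := h.2.1; omega)
    omega

theorem lt_of_isLevel {a b i j : ℕ} (h : Matched w i j) (hl : IsLevel w a b)
    (hia : i < a) (haj : a < j) : b < j := by
  by_contra hjb
  have := hl.2 j haj.le (by omega)
  have := h.depth_pred_lt hia.le haj
  have := h.depth_snd
  omega

theorem le_of_isLevel {a b i j : ℕ} (h : Matched w i j) (hl : IsLevel w a b)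
    (hai : a < i) (hib : i ≤ b) : j ≤ b := by
  by_contra hbj
  have := hl.2 (i - 1) (by omega) (by omega)
  have := h.depth_pred_lt hib (by omega)
  have := hl.1
  omega

theorem not_cross {i j i' j' : ℕ} (h : Matched w i j) (h' : Matched w i' j') :
    ¬(i < i' ∧ i' < j ∧ j < j') := fun ⟨h1, h2, h3⟩ => by
  have := h.lt_of_isLevel h'.isLevel h1 h2
  omega

theorem fst_ne {i j k : ℕ} {s : RSym} (h : Matched w i j) (hk : w[k - 1]? = some s)
    (hs : s ≠ .op) : i ≠ k := by
  rintro rfl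
  exact hs (Option.some.inj (hk.symm.trans h.2.2.2.1))

theorem snd_ne {i j k : ℕ} {s : RSym} (h : Matched w i j) (hk : w[k - 1]? = some s)
    (hs : s ≠ .cl) : j ≠ k := by
  rintro rfl
  exact hs (Option.some.inj (hk.symm.trans h.2.2.2.2.1))

end Matched

namespace SecStr

variable {θ : ℕ} {w : List RSym}

theorem IsMotzkin.exists_matched_of_depth_lt (hw : IsMotzkin w) {a k : ℕ} (hak : a ≤ k)
    (h : depth w k < depth w a) : ∃ i j, Matched w i j ∧ i ≤ a ∧ a < j ∧ j ≤ k := by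
  obtain ⟨t, j, -, hta, haj, hjk, ht, hj, hmid⟩ := exists_window (depth_succ_bounds w)
    (Nat.zero_le a) hak (by simp; have := hw.depth_nonneg k; omega) (sub_one_lt _) (by omega)
  exact ⟨t + 1, j, matched_of_window (by omega) ht hj hmid, hta, haj, hjk⟩

theorem IsMotzkin.exists_matched_of_lt_depth (hw : IsMotzkin w) {a b : ℕ} (hab : a ≤ b)
    (h : depth w a < depth w b) : ∃ i j, Matched w i j ∧ a < i ∧ i ≤ b ∧ b < j := by
  have hend : depth w (w.length + b) = 0 := by
    rw [depth_of_length_le (Nat.le_add_right _ _), hw.height_eq_zero]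
  obtain ⟨t, j, hat, htb, hbj, -, ht, hj, hmid⟩ := exists_window (depth_succ_bounds w)
    hab (Nat.le_add_left b w.length) (by omega) (sub_one_lt _)
    (by have := hw.depth_nonneg a; omega)
  exact ⟨t + 1, j, matched_of_window (by omega) ht hj hmid, by omega, htb, hbj⟩

theorem IsMotzkin.exists_matched_of_ne_dot (hw : IsMotzkin w) {x : ℕ} (hx : 1 ≤ x)
    (hxw : x ≤ w.length) (h : w[x - 1]? ≠ some .dot) :
    ∃ i j, Matched w i j ∧ (i = x ∨ j = x) := by
  rcases hs : w[x - 1]? with _ | s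
  · rw [List.getElem?_eq_none_iff] at hs
    omega
  have hstep := depth_succ_of_getElem? hs
  rw [Nat.sub_add_cancel hx] at hstep
  cases s
  · exact absurd hs h
  · obtain ⟨i, j, hij, h1, h2, -⟩ :=
      hw.exists_matched_of_lt_depth (Nat.sub_le x 1) (by simp only [RSym.weight] at hstep; omega)
    exact ⟨i, j, hij, Or.inl (by omega)⟩
  · obtain ⟨i, j, hij, -, h1, h2⟩ :=
      hw.exists_matched_of_depth_lt (Nat.sub_le x 1) (by simp only [RSym.weight] at hstep; omega)
    exact ⟨i, j, hij, Or.inr (by omega)⟩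

theorem mem_structOf {p : ℕ × ℕ} : p ∈ structOf w ↔ Matched w p.1 p.2 := by
  simp only [structOf, Finset.mem_filter, Finset.mem_product, Finset.mem_range,
    and_iff_right_iff_imp]
  intro h
  have := h.2.1
  have := h.2.2.1
  omega

def MinHairpin (θ : ℕ) (w : List RSym) : Prop := ∀ i j, Matched w i j → i + θ < j

theorem isSecStr_structOf (h : MinHairpin θ w) : IsSecStr θ w.length (structOf w) := by
  refine ⟨fun p hp => ?_, fun p hp q hq hne => ?_, fun p hp q hq => ?_⟩
  · have hm := mem_structOf.1 hp
    exact ⟨hm.1, hm.2.2.1, h _ _ hm⟩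
  · rw [mem_structOf] at hp hq
    exact ⟨fun e => hne (Prod.ext e (hp.right_unique (e ▸ hq))),
      hp.fst_ne hq.2.2.2.2.1 (by decide), hp.snd_ne hq.2.2.2.1 (by decide),
      fun e => hne (Prod.ext (hp.left_unique (e ▸ hq)) e)⟩
  · exact (mem_structOf.1 hp).not_cross (mem_structOf.1 hq)

theorem isSecStr_insert {n : ℕ} {P : Finset (ℕ × ℕ)} {q : ℕ × ℕ} (hP : IsSecStr θ n P)
    (hq : 1 ≤ q.1 ∧ q.2 ≤ n ∧ q.1 + θ < q.2)
    (hdisj : ∀ p ∈ P, p.1 ≠ q.1 ∧ p.1 ≠ q.2 ∧ p.2 ≠ q.1 ∧ p.2 ≠ q.2)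
    (hcross : ∀ p ∈ P,
      ¬(p.1 < q.1 ∧ q.1 < p.2 ∧ p.2 < q.2) ∧ ¬(q.1 < p.1 ∧ p.1 < q.2 ∧ q.2 < p.2)) :
    IsSecStr θ n (insert q P) := by
  simp only [IsSecStr, Finset.forall_mem_insert, ne_eq, not_true_eq_false, IsEmpty.forall_iff,
    true_and, lt_self_iff_false, false_and, not_false_eq_true]
  refine ⟨⟨hq, hP.1⟩, ⟨fun p hp _ => ?_, fun p hp => ⟨fun _ => hdisj p hp, hP.2.1 p hp⟩⟩,
    fun p hp => (hcross p hp).2, fun p hp => ⟨(hcross p hp).1, hP.2.2 p hp⟩⟩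
  obtain ⟨h1, h2, h3, h4⟩ := hdisj p hp
  exact ⟨h1.symm, h3.symm, h2.symm, h4.symm⟩

/-- Positions are `0`-based here, unlike in `Matched`: the pair that can be added to the
structure is `(a + 1, b + 1)`. -/
def CanPair (θ : ℕ) (w : List RSym) (a b : ℕ) : Prop :=
  a + θ < b ∧ w[a]? = some .dot ∧ w[b]? = some .dot ∧ IsLevel w a b

def IsExtendable (θ : ℕ) (w : List RSym) : Prop := ∃ a b, CanPair θ w a b

theorem isLevel_succ_iff {a b : ℕ} (ha : w[a]? = some .dot) (hb : w[b]? = some .dot) :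
    IsLevel w (a + 1) (b + 1) ↔ IsLevel w a b := by
  have ea := depth_succ_of_getElem? ha
  have eb := depth_succ_of_getElem? hb
  simp only [RSym.weight, add_zero] at ea eb
  unfold IsLevel
  rw [ea, eb]
  refine and_congr_right fun hab => ⟨fun h k h1 h2 => ?_, fun h k h1 h2 => ?_⟩
  · rcases h1.eq_or_lt with rfl | h1
    exacts [le_rfl, h k h1 (by omega)]
  · rcases h2.eq_or_lt with rfl | h2
    exacts [eb ▸ hab.le, h k (by omega) (by omega)]

theorem CanPair.succ_not_mem_structOf {a b : ℕ} (h : CanPair θ w a b) :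
    (a + 1, b + 1) ∉ structOf w := fun hm => by
  have := (mem_structOf.1 hm).2.2.2.1
  simp [h.2.1] at this

theorem CanPair.isSecStr_insert {a b : ℕ} (h : CanPair θ w a b)
    (hS : IsSecStr θ w.length (structOf w)) :
    IsSecStr θ w.length (insert (a + 1, b + 1) (structOf w)) := by
  obtain ⟨hab, ha, hb, hl⟩ := h
  have hbw : b < w.length := (List.getElem?_eq_some_iff.1 hb).1
  have ha' : w[a + 1 - 1]? = some .dot := by simpa using ha
  have hb' : w[b + 1 - 1]? = some .dot := by simpa using hb
  have hl' := (isLevel_succ_iff ha hb).2 hl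
  refine SecStr.isSecStr_insert hS ⟨le_add_self, hbw, by simp; omega⟩ (fun p hp => ?_)
    (fun p hp => ?_)
  · have hm := mem_structOf.1 hp
    exact ⟨hm.fst_ne ha' (by decide), hm.fst_ne hb' (by decide),
      hm.snd_ne ha' (by decide), hm.snd_ne hb' (by decide)⟩
  · have hm := mem_structOf.1 hp
    refine ⟨fun ⟨h1, h2, h3⟩ => ?_, fun ⟨h1, h2, h3⟩ => ?_⟩
    · have := hm.lt_of_isLevel hl' h1 h2
      simp only at this h3
      omega
    · have := hm.le_of_isLevel hl' h1 h2.le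
      simp only at this h3
      omega

theorem IsMotzkin.isExtendable_of_isSecStr_insert (hw : IsMotzkin w) {q : ℕ × ℕ}
    (hq : q ∉ structOf w) (hS : IsSecStr θ w.length (insert q (structOf w))) :
    IsExtendable θ w := by
  obtain ⟨a, b⟩ := q
  have hqS := Finset.mem_insert_self (a, b) (structOf w)
  obtain ⟨ha1, hbn, hab⟩ := hS.1 _ hqS
  have hm : ∀ {i j}, Matched w i j → (i ≠ a ∧ i ≠ b ∧ j ≠ a ∧ j ≠ b) ∧
      ¬(i < a ∧ a < j ∧ j < b) ∧ ¬(a < i ∧ i < b ∧ b < j) := fun {i j} h => by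
    have hij : (i, j) ∈ structOf w := mem_structOf.2 h
    have hp := Finset.mem_insert_of_mem (b := (a, b)) hij
    have hne : (i, j) ≠ (a, b) := fun e => hq (e ▸ hij)
    exact ⟨hS.2.1 _ hp _ hqS hne, hS.2.2 _ hp _ hqS, hS.2.2 _ hqS _ hp⟩
  have hdot : ∀ x, 1 ≤ x → x ≤ w.length → (x = a ∨ x = b) → w[x - 1]? = some .dot := by
    intro x hx hxn hxab
    by_contra hne
    obtain ⟨i, j, hij, hx'⟩ := hw.exists_matched_of_ne_dot hx hxn hne
    have := (hm hij).1
    omega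
  have hda := hdot a ha1 (by omega) (Or.inl rfl)
  have hdb := hdot b (by omega) hbn (Or.inr rfl)
  have hnodip : ∀ k, a ≤ k → k ≤ b → depth w a ≤ depth w k := by
    intro k hak hkb
    by_contra! hlt
    obtain ⟨i, j, hij, hia, haj, hjk⟩ := hw.exists_matched_of_depth_lt hak hlt
    have := hm hij
    omega
  have hlevel : IsLevel w a b := by
    refine ⟨(hnodip b (by omega) le_rfl).antisymm (not_lt.1 fun hlt => ?_), hnodip⟩
    obtain ⟨i, j, hij, hai, hib, hbj⟩ := hw.exists_matched_of_lt_depth (by omega) hlt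
    have := hm hij
    omega
  refine ⟨a - 1, b - 1, by omega, hda, hdb, ?_⟩
  rwa [← isLevel_succ_iff hda hdb, Nat.sub_add_cancel ha1, Nat.sub_add_cancel (by omega)]

theorem saturated_iff_not_isExtendable (hw : IsMotzkin w) (hmin : MinHairpin θ w) :
    Saturated θ w.length (structOf w) ↔ ¬ IsExtendable θ w :=
  ⟨fun ⟨hS, hmax⟩ ⟨_, _, h⟩ => hmax _ h.succ_not_mem_structOf (h.isSecStr_insert hS),
    fun h => ⟨isSecStr_structOf hmin,
      fun _ hq hS => h (hw.isExtendable_of_isSecStr_insert hq hS)⟩⟩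

variable {x y : List RSym}

theorem isLevel_append_left {a b : ℕ} (ha : a ≤ x.length) (hb : b ≤ x.length) :
    IsLevel (x ++ y) a b ↔ IsLevel x a b := by
  unfold IsLevel
  rw [depth_append_of_le y ha, depth_append_of_le y hb]
  exact and_congr_right fun _ => forall_congr' fun k => imp_congr_right fun _ =>
    imp_congr_right fun hkb => by rw [depth_append_of_le y (hkb.trans hb)]

theorem isLevel_append_right (x : List RSym) {a b : ℕ} :
    IsLevel (x ++ y) (x.length + a) (x.length + b) ↔ IsLevel y a b := by
  simp only [IsLevel, depth_append_add, add_right_inj]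
  refine and_congr_right fun _ => ⟨fun h k h1 h2 => ?_, fun h k h1 h2 => ?_⟩
  · simpa [depth_append_add] using h (x.length + k) (by omega) (by omega)
  · obtain ⟨k, rfl⟩ := Nat.exists_eq_add_of_le (le_trans (Nat.le_add_right _ _) h1)
    simpa [depth_append_add] using h k (by omega) (by omega)

theorem canPair_append_left {a b : ℕ} (hb : b < x.length) :
    CanPair θ (x ++ y) a b ↔ CanPair θ x a b :=
  and_congr_right fun hab => by
    rw [List.getElem?_append_left (by omega), List.getElem?_append_left hb,
      isLevel_append_left (by omega) hb.le]

theorem canPair_append_right (x : List RSym) {a b : ℕ} :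
    CanPair θ (x ++ y) (x.length + a) (x.length + b) ↔ CanPair θ y a b := by
  simp only [CanPair, getElem?_append_add, isLevel_append_right]
  exact and_congr_left' ⟨by omega, by omega⟩

def IsOuterDot (w : List RSym) (a : ℕ) : Prop := w[a]? = some .dot ∧ depth w a = 0

def HasOuterDot (w : List RSym) : Prop := ∃ a, IsOuterDot w a

theorem IsOuterDot.lt_length {a : ℕ} (h : IsOuterDot w a) : a < w.length :=
  (List.getElem?_eq_some_iff.1 h.1).1

theorem isOuterDot_append_left {a : ℕ} (ha : a < x.length) :
    IsOuterDot (x ++ y) a ↔ IsOuterDot x a := by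
  rw [IsOuterDot, IsOuterDot, List.getElem?_append_left ha, depth_append_of_le y ha.le]

theorem isOuterDot_append_right (hx : height x = 0) {a : ℕ} :
    IsOuterDot (x ++ y) (x.length + a) ↔ IsOuterDot y a := by
  rw [IsOuterDot, IsOuterDot, getElem?_append_add, depth_append_add, hx, zero_add]

theorem IsOuterDot.length_le {a : ℕ} (hx : ¬ HasOuterDot x) (h : IsOuterDot (x ++ y) a) :
    x.length ≤ a :=
  not_lt.1 fun ha => hx ⟨a, (isOuterDot_append_left ha).1 h⟩

theorem hasOuterDot_append (hx : height x = 0) :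
    HasOuterDot (x ++ y) ↔ HasOuterDot x ∨ HasOuterDot y := by
  constructor
  · rintro ⟨a, ha⟩
    rcases lt_or_ge a x.length with hax | hax
    · exact Or.inl ⟨a, (isOuterDot_append_left hax).1 ha⟩
    · obtain ⟨a, rfl⟩ := Nat.exists_eq_add_of_le hax
      exact Or.inr ⟨a, (isOuterDot_append_right hx).1 ha⟩
  · rintro (⟨a, ha⟩ | ⟨a, ha⟩)
    · exact ⟨a, (isOuterDot_append_left ha.lt_length).2 ha⟩
    · exact ⟨_, (isOuterDot_append_right hx).2 ha⟩

theorem isOuterDot_replicate_dot {n a : ℕ} : IsOuterDot (List.replicate n .dot) a ↔ a < n := by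
  simp [IsOuterDot, List.getElem?_replicate, depth_replicate, RSym.weight]

theorem hasOuterDot_replicate_dot {n : ℕ} : HasOuterDot (List.replicate n .dot) ↔ 0 < n :=
  ⟨fun ⟨_, ha⟩ => by have := isOuterDot_replicate_dot.1 ha; omega,
    fun h => ⟨0, isOuterDot_replicate_dot.2 h⟩⟩

theorem IsMotzkin.canPair_of_isOuterDot (hw : IsMotzkin w) {a b : ℕ} (ha : IsOuterDot w a)
    (hb : IsOuterDot w b) (hab : a + θ < b) : CanPair θ w a b :=
  ⟨hab, ha.1, hb.1, ha.2.trans hb.2.symm, fun k _ _ => ha.2 ▸ hw.depth_nonneg k⟩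

theorem IsMotzkin.isOuterDot_of_canPair (hw : IsMotzkin w) {a b p : ℕ} (h : CanPair θ w a b)
    (hap : a ≤ p) (hpb : p ≤ b) (hp : depth w p = 0) : IsOuterDot w a ∧ IsOuterDot w b := by
  obtain ⟨-, ha, hb, heq, hmin⟩ := h
  have := hmin p hap hpb
  have := hw.depth_nonneg a
  exact ⟨⟨ha, by omega⟩, ⟨hb, by omega⟩⟩

theorem isExtendable_append (hx : IsMotzkin x) (hy : IsMotzkin y)
    (hgap : ∀ a b, IsOuterDot x a → IsOuterDot y b → a + θ < x.length + b) :
    IsExtendable θ (x ++ y) ↔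
      IsExtendable θ x ∨ IsExtendable θ y ∨ (HasOuterDot x ∧ HasOuterDot y) := by
  constructor
  · rintro ⟨a, b, h⟩
    rcases lt_or_ge b x.length with hb | hb
    · exact Or.inl ⟨a, b, (canPair_append_left hb).1 h⟩
    obtain ⟨b, rfl⟩ := Nat.exists_eq_add_of_le hb
    rcases lt_or_ge a x.length with ha | ha
    · have hx0 : depth (x ++ y) x.length = 0 := by
        rw [depth_append_of_le y le_rfl, depth_of_length_le le_rfl, hx.height_eq_zero]
      obtain ⟨hao, hbo⟩ := (hx.append hy).isOuterDot_of_canPair h ha.le hb hx0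
      exact Or.inr (Or.inr ⟨⟨a, (isOuterDot_append_left ha).1 hao⟩,
        ⟨b, (isOuterDot_append_right hx.height_eq_zero).1 hbo⟩⟩)
    · obtain ⟨a, rfl⟩ := Nat.exists_eq_add_of_le ha
      exact Or.inr (Or.inl ⟨a, b, (canPair_append_right x).1 h⟩)
  · rintro (⟨a, b, h⟩ | ⟨a, b, h⟩ | ⟨⟨a, ha⟩, ⟨b, hb⟩⟩)
    · exact ⟨a, b, (canPair_append_left (List.getElem?_eq_some_iff.1 h.2.2.1).1).2 h⟩
    · exact ⟨_, _, (canPair_append_right x).2 h⟩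
    · exact ⟨a, x.length + b, (hx.append hy).canPair_of_isOuterDot
        ((isOuterDot_append_left ha.lt_length).2 ha)
        ((isOuterDot_append_right hx.height_eq_zero).2 hb) (hgap a b ha hb)⟩

theorem isExtendable_replicate_dot {n : ℕ} :
    IsExtendable θ (List.replicate n .dot) ↔ θ + 2 ≤ n := by
  constructor
  · rintro ⟨a, b, hab, -, hb, -⟩
    have := (List.getElem?_eq_some_iff.1 hb).1
    simp only [List.length_replicate] at this
    omega
  · intro h
    exact ⟨0, θ + 1, (isMotzkin_replicate_dot n).canPair_of_isOuterDot
      (isOuterDot_replicate_dot.2 (by omega)) (isOuterDot_replicate_dot.2 (by omega)) (by omega)⟩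

theorem minHairpin_replicate_dot (n : ℕ) : MinHairpin θ (List.replicate n .dot) :=
  fun _ _ h => absurd (List.eq_of_mem_replicate (List.mem_of_getElem? h.2.2.2.1)) (by decide)

def wrap (m : ℕ) (u : List RSym) : List RSym :=
  List.replicate m .op ++ (u ++ List.replicate m .cl)

section Wrap

variable {m : ℕ} {u : List RSym}

@[simp] theorem length_wrap : (wrap m u).length = m + u.length + m := by
  simp only [wrap, List.length_append, List.length_replicate]
  ring

theorem IsMotzkin.wrap (hu : IsMotzkin u) (m : ℕ) : IsMotzkin (wrap m u) := by
  refine ⟨by simp [SecStr.wrap, hu.height_eq_zero, RSym.weight], fun k => ?_⟩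
  have hd : depth u (k - m) = if k - m ≤ u.length then depth u (k - m) else 0 := by
    split_ifs with h
    · rfl
    · rw [depth_of_length_le (by omega), hu.height_eq_zero]
  simp only [SecStr.wrap, depth_append, depth_replicate, RSym.weight, List.length_replicate]
  have := hu.depth_nonneg (k - m)
  split_ifs at hd <;> push_cast <;> omega

theorem depth_wrap_of_le {k : ℕ} (hk : k ≤ m) : depth (wrap m u) k = k := by
  rw [wrap, depth_append_of_le _ (by simpa using hk), depth_replicate, min_eq_left hk]
  simp [RSym.weight]

theorem depth_wrap_add {k : ℕ} (hk : k ≤ u.length) :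
    depth (wrap m u) (m + k) = m + depth u k := by
  have := depth_append_add (List.replicate m .op) (u ++ List.replicate m .cl) k
  simp only [List.length_replicate] at this
  rw [wrap, this, depth_append_of_le _ hk]
  simp [RSym.weight]

theorem le_of_getElem?_wrap {k : ℕ} {s : RSym} (h : (wrap m u)[k]? = some s) (hs : s ≠ .op) :
    m ≤ k := by
  by_contra hk
  rw [wrap, List.getElem?_append_left (by simpa using hk)] at h
  exact hs (List.eq_of_mem_replicate (List.mem_of_getElem? h))

theorem lt_of_getElem?_wrap {k : ℕ} {s : RSym} (h : (wrap m u)[k]? = some s) (hs : s ≠ .cl) :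
    k < m + u.length := by
  by_contra hk
  rw [wrap, ← List.append_assoc, List.getElem?_append_right (by simp; omega)] at h
  exact hs (List.eq_of_mem_replicate (List.mem_of_getElem? h))

theorem isExtendable_wrap : IsExtendable θ (wrap m u) ↔ IsExtendable θ u := by
  have key : ∀ a b, b < u.length →
      (CanPair θ (wrap m u) (m + a) (m + b) ↔ CanPair θ u a b) := by
    intro a b hb
    have := canPair_append_right (θ := θ) (List.replicate m .op)
      (y := u ++ List.replicate m .cl) (a := a) (b := b)
    rw [List.length_replicate] at this
    rw [wrap, this, canPair_append_left hb]
  constructor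
  · rintro ⟨a, b, h⟩
    obtain ⟨a, rfl⟩ := Nat.exists_eq_add_of_le (le_of_getElem?_wrap h.2.1 (by decide))
    obtain ⟨b, rfl⟩ := Nat.exists_eq_add_of_le (le_of_getElem?_wrap h.2.2.1 (by decide))
    exact ⟨a, b, (key a b (by have := lt_of_getElem?_wrap h.2.2.1 (by decide); omega)).1 h⟩
  · rintro ⟨a, b, h⟩
    exact ⟨m + a, m + b, (key a b (List.getElem?_eq_some_iff.1 h.2.2.1).1).2 h⟩

theorem not_hasOuterDot_wrap (hu : IsMotzkin u) (hm : 0 < m) : ¬ HasOuterDot (wrap m u) := by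
  rintro ⟨a, ha, hd⟩
  have := lt_of_getElem?_wrap ha (by decide)
  obtain ⟨a, rfl⟩ := Nat.exists_eq_add_of_le (le_of_getElem?_wrap ha (by decide))
  rw [depth_wrap_add (by omega)] at hd
  have := hu.depth_nonneg a
  omega

end Wrap

end SecStr

namespace Matched

open SecStr

variable {x y : List RSym} {i j : ℕ}

theorem of_append_left (h : Matched (x ++ y) i j) (hj : j ≤ x.length) : Matched x i j := by
  obtain ⟨hi, hij, -, hop, hcl, hl⟩ := matched_iff.1 h
  rw [List.getElem?_append_left (by omega)] at hop hcl
  exact matched_iff.2 ⟨hi, hij, hj, hop, hcl, (isLevel_append_left (by omega) (by omega)).1 hl⟩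

theorem of_append_right (h : Matched (x ++ y) (x.length + i) (x.length + j)) (hi : 1 ≤ i) :
    Matched y i j := by
  obtain ⟨-, hij, hj, hop, hcl, hl⟩ := matched_iff.1 h
  have ei : x.length + i - 1 = x.length + (i - 1) := by omega
  have ej : x.length + j - 1 = x.length + (j - 1) := by omega
  rw [ei, getElem?_append_add] at hop
  rw [ej, getElem?_append_add] at hcl
  rw [ej, isLevel_append_right] at hl
  rw [List.length_append] at hj
  exact matched_iff.2 ⟨hi, by omega, by omega, hop, hcl, hl⟩

theorem of_wrap {m : ℕ} {u : List RSym} (h : Matched (wrap m u) (m + i) (m + j)) (hi : 1 ≤ i)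
    (hj : j ≤ u.length) : Matched u i j := by
  have h' : Matched (List.replicate m .op ++ (u ++ List.replicate m .cl))
      ((List.replicate m RSym.op).length + i) ((List.replicate m RSym.op).length + j) := by
    rw [List.length_replicate]
    exact h
  exact (h'.of_append_right hi).of_append_left hj

end Matched

namespace SecStr

variable {θ : ℕ} {x y u : List RSym}

theorem MinHairpin.append (hx : IsMotzkin x) (hx' : MinHairpin θ x) (hy' : MinHairpin θ y) :
    MinHairpin θ (x ++ y) := by
  intro i j h
  rcases le_or_gt j x.length with hj | hj
  · exact hx' i j (h.of_append_left hj)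
  rcases le_or_gt i x.length with hi | hi
  · have h1 := h.depth_pred_lt hi hj
    rw [depth_append_of_le y (k := i - 1) (by omega), depth_append_of_le y le_rfl,
      depth_of_length_le le_rfl, hx.height_eq_zero] at h1
    exact absurd h1 (not_lt.2 (hx.depth_nonneg _))
  · obtain ⟨i, rfl⟩ := Nat.exists_eq_add_of_le hi.le
    obtain ⟨j, rfl⟩ := Nat.exists_eq_add_of_le hj.le
    have := hy' i j (h.of_append_right (by omega))
    omega

theorem MinHairpin.wrap (hu : IsMotzkin u) (hθ : θ ≤ u.length) (hu' : MinHairpin θ u)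
    (m : ℕ) : MinHairpin θ (wrap m u) := by
  intro i j h
  have hmj := le_of_getElem?_wrap h.2.2.2.2.1 (by decide)
  have him := lt_of_getElem?_wrap h.2.2.2.1 (by decide)
  have hlen := h.2.2.1
  rw [length_wrap] at hlen
  rcases le_or_gt i m with hi | hi
  · suffices m + u.length < j by omega
    by_contra! hj
    have e := h.depth_snd
    obtain ⟨j, rfl⟩ := Nat.exists_eq_add_of_le (hmj.trans (Nat.sub_le j 1))
    rw [depth_wrap_add (k := j) (by omega), depth_wrap_of_le (k := i - 1) (by omega)] at e
    have := hu.depth_nonneg j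
    have := h.1
    omega
  obtain ⟨i, rfl⟩ := Nat.exists_eq_add_of_le hi.le
  obtain ⟨j, rfl⟩ := Nat.exists_eq_add_of_le (hi.le.trans h.2.1.le)
  rcases le_or_gt j u.length with hj | hj
  · have := hu' i j (h.of_wrap (by omega) hj)
    omega
  · have e := h.depth_pred_lt (p := m + u.length) (by omega) (by omega)
    rw [show m + i - 1 = m + (i - 1) by omega, depth_wrap_add (k := i - 1) (by omega),
      depth_wrap_add le_rfl, depth_of_length_le le_rfl, hu.height_eq_zero] at e
    have := hu.depth_nonneg (i - 1)
    omega

end SecStr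

namespace SecStr

open WTree

variable {θ e : ℕ}

theorem word_node_nil (ks : List ℕ) : (node e [] ks).word = List.replicate ks.headI .dot := by
  simp [WTree.word, WTree.wordL]

theorem word_node_cons (c : WTree) (cs : List WTree) (ks : List ℕ) :
    (node e (c :: cs) ks).word = List.replicate ks.headI .dot ++
      (wrap (c.edgeW + 1) c.word ++ (node e cs ks.tail).word) := by
  simp [WTree.word, WTree.wordL, wrap]

theorem cornersLe_node_iff {b : ℕ} {cs : List WTree} {ks : List ℕ} :
    CornersLe b (node e cs ks) ↔ (∀ a ∈ ks, a ≤ b) ∧ ∀ c ∈ cs, CornersLe b c :=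
  ⟨fun | .node _ _ _ h1 h2 => ⟨h1, h2⟩, fun ⟨h1, h2⟩ => .node _ _ _ h1 h2⟩

theorem atMostOnePos_node_iff {cs : List WTree} {ks : List ℕ} :
    AtMostOnePos (node e cs ks) ↔
      (ks.filter (fun a => 0 < a)).length ≤ 1 ∧ ∀ c ∈ cs, AtMostOnePos c :=
  ⟨fun | .node _ _ _ h1 h2 => ⟨h1, h2⟩, fun ⟨h1, h2⟩ => .node _ _ _ h1 h2⟩

theorem length_filter_pos_cons_le_one (k : ℕ) (l : List ℕ) :
    ((k :: l).filter (fun a => 0 < a)).length ≤ 1 ↔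
      (l.filter (fun a => 0 < a)).length ≤ 1 ∧ (0 < k → ∀ a ∈ l, a = 0) := by
  rcases Nat.eq_zero_or_pos k with rfl | hk
  · simp
  · have h : (l.filter (fun a => 0 < a)).length = 0 ↔ ∀ a ∈ l, a = 0 := by
      simp [List.filter_eq_nil_iff]
    simp only [List.filter_cons, hk, decide_true, if_true, List.length_cons, forall_const, ← h]
    omega

theorem isMotzkin_word_node {cs : List WTree} (ks : List ℕ) (h : ∀ c ∈ cs, IsMotzkin c.word) :
    IsMotzkin (node e cs ks).word := by
  induction cs generalizing ks with
  | nil => rw [word_node_nil]; exact isMotzkin_replicate_dot _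
  | cons c cs ih =>
    rw [List.forall_mem_cons] at h
    rw [word_node_cons]
    exact (isMotzkin_replicate_dot _).append ((h.1.wrap _).append (ih _ h.2))

theorem isMotzkin_word : ∀ T : WTree, IsMotzkin T.word
  | node _ _ ks => isMotzkin_word_node ks fun c _ => isMotzkin_word c

theorem minHairpin_word_node {cs : List WTree} (ks : List ℕ)
    (hθ : ∀ c ∈ cs, θ ≤ c.word.length) (h : ∀ c ∈ cs, MinHairpin θ c.word) :
    MinHairpin θ (node e cs ks).word := by
  induction cs generalizing ks with
  | nil => rw [word_node_nil]; exact minHairpin_replicate_dot _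
  | cons c cs ih =>
    rw [List.forall_mem_cons] at hθ h
    rw [word_node_cons]
    exact (minHairpin_replicate_dot _).append (isMotzkin_replicate_dot _)
      ((h.1.wrap (isMotzkin_word c) hθ.1 _).append ((isMotzkin_word c).wrap _)
        (ih _ hθ.2 h.2))

theorem hasOuterDot_word_node {cs : List WTree} {ks : List ℕ}
    (hlen : ks.length = cs.length + 1) :
    HasOuterDot (node e cs ks).word ↔ ∃ a ∈ ks, 0 < a := by
  induction cs generalizing ks with
  | nil =>
    obtain ⟨k, rfl⟩ := List.length_eq_one_iff.1 hlen
    simp [word_node_nil, hasOuterDot_replicate_dot]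
  | cons c cs ih =>
    obtain ⟨k, ks, rfl⟩ := List.exists_cons_of_length_eq_add_one hlen
    rw [word_node_cons, hasOuterDot_append (by simp [RSym.weight]),
      hasOuterDot_append ((isMotzkin_word c).wrap _).height_eq_zero, hasOuterDot_replicate_dot,
      List.headI_cons, List.tail_cons, ih (by simpa using hlen)]
    simp [not_hasOuterDot_wrap (isMotzkin_word c)]

theorem not_isExtendable_word_node_iff {cs : List WTree} {ks : List ℕ}
    (hlen : ks.length = cs.length + 1) (hθ : ∀ c ∈ cs, θ ≤ c.word.length)
    (hchild : ∀ c ∈ cs, (¬ IsExtendable θ c.word ↔ CornersLe (θ + 1) c ∧ AtMostOnePos c)) :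
    ¬ IsExtendable θ (node e cs ks).word ↔
      CornersLe (θ + 1) (node e cs ks) ∧ AtMostOnePos (node e cs ks) := by
  induction cs generalizing ks with
  | nil =>
    obtain ⟨k, rfl⟩ := List.length_eq_one_iff.1 hlen
    have := List.length_filter_le (fun a => decide (0 < a)) [k]
    simp only [word_node_nil, List.headI_cons, isExtendable_replicate_dot, cornersLe_node_iff,
      atMostOnePos_node_iff, List.forall_mem_singleton, List.not_mem_nil, IsEmpty.forall_iff,
      implies_true, and_true, List.length_singleton] at this ⊢
    omega
  | cons c cs ih =>
    obtain ⟨k, ks, rfl⟩ := List.exists_cons_of_length_eq_add_one hlen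
    rw [List.forall_mem_cons] at hθ hchild
    have hc := isMotzkin_word c
    have hwrap := not_hasOuterDot_wrap hc (Nat.succ_pos c.edgeW)
    rw [word_node_cons, List.headI_cons, List.tail_cons,
      isExtendable_append (isMotzkin_replicate_dot k) ((hc.wrap _).append (isMotzkin_word _))
        fun a b ha hb => ?_,
      isExtendable_append (hc.wrap _) (isMotzkin_word _) fun a _ ha _ => absurd ⟨a, ha⟩ hwrap,
      isExtendable_wrap, isExtendable_replicate_dot, hasOuterDot_replicate_dot,
      hasOuterDot_append (hc.wrap _).height_eq_zero, hasOuterDot_word_node (by simpa using hlen)]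
    · simp only [not_or, hchild.1, ih (by simpa using hlen) hθ.2 hchild.2, hwrap, false_and, false_or,
        cornersLe_node_iff, atMostOnePos_node_iff, List.forall_mem_cons,
        length_filter_pos_cons_le_one, not_and, not_exists, not_lt, nonpos_iff_eq_zero,
        not_false_eq_true, and_true, show ¬θ + 2 ≤ k ↔ k ≤ θ + 1 by omega]
      tauto
    · have := isOuterDot_replicate_dot.1 ha
      have := hb.length_le hwrap
      have := hθ.1
      simp only [length_wrap, List.length_replicate] at *
      omega

end SecStr

namespace AdmissibleNR

open SecStr

variable {θ τ : ℕ} {T : WTree}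

theorem le_length_word (h : AdmissibleNR θ τ T) : θ ≤ T.word.length := by
  induction h with
  | node _ cs ks hlen _ hleaf _ _ ih =>
    rcases cs with _ | ⟨c, cs⟩
    · obtain ⟨k, ks, rfl⟩ := List.exists_cons_of_length_eq_add_one hlen
      simpa [word_node_nil] using hleaf rfl k (by simp)
    · have := ih c (by simp)
      rw [word_node_cons]
      simp only [List.length_append, length_wrap]
      omega

theorem minHairpin_word (h : AdmissibleNR θ τ T) : MinHairpin θ T.word := by
  induction h with
  | node _ cs ks _ _ _ _ hcs ih =>
    exact minHairpin_word_node ks (fun c hc => (hcs c hc).le_length_word) ih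

theorem not_isExtendable_word_iff (h : AdmissibleNR θ τ T) :
    ¬ IsExtendable θ T.word ↔ CornersLe (θ + 1) T ∧ AtMostOnePos T := by
  induction h with
  | node _ cs ks hlen _ _ _ hcs ih =>
    exact not_isExtendable_word_node_iff hlen (fun c hc => (hcs c hc).le_length_word) ih

end AdmissibleNR

/-- With `τ = 0`, a secondary structure with at least one link is saturated
iff its dual weighted rooted plane tree has all corners of weight at most
`θ + 1` and at most one corner of strictly positive weight at each node. -/
theorem saturated_iff_tree_conditions (θ : ℕ) (T : WTree)
    (hT : Admissible θ 0 T) :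
    Saturated θ (T.word).length (structOf T.word) ↔
      CornersLe (θ + 1) T ∧ AtMostOnePos T := by
  obtain ⟨e, cs, ks⟩ := T
  obtain ⟨hlen, -, hcs⟩ := hT
  have hθ : ∀ c ∈ cs, θ ≤ c.word.length := fun c hc => (hcs c hc).le_length_word
  rw [SecStr.saturated_iff_not_isExtendable (SecStr.isMotzkin_word _)
    (SecStr.minHairpin_word_node ks hθ fun c hc => (hcs c hc).minHairpin_word)]
  exact SecStr.not_isExtendable_word_node_iff hlen hθ fun c hc =>
    (hcs c hc).not_isExtendable_word_iff
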